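/- arXiv:1505.07203 — 2 statements merged into one kernel-verified Lean document; each statement's English description precedes it below -/
import Mathlib

section
/- Let G = (V,E) be a finite connected graph and H = (P₀,…,P_ℓ) a connected complete hierarchy on V. Then for every λ ∈ {0,…,ℓ}, the λ-level partition of G for the saliency map Φ(H) equals P_λ; equivalently, the connected components of the graph (V, {u ∈ E : Φ(H)(u) < λ}) are exactly the regions of P_λ. -/
open SimpleGraph

variable {V : Type*}

/-- `P'` refines `P`: every region of `P'` is contained in a region of `P`. -/
def Refines (P' P : Set (Set V)) : Prop := ∀ R ∈ P', ∃ S ∈ P, R ⊆ S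

/-- `x` and `y` lie in the same region of `P`. -/
def SameRegion (P : Set (Set V)) (x y : V) : Prop := ∃ R ∈ P, x ∈ R ∧ y ∈ R

/-- The cut of a partition `P` for the graph `G`. -/
def cutOf (G : SimpleGraph V) (P : Set (Set V)) : Set (Sym2 V) :=
  {e | e ∈ G.edgeSet ∧ ∀ x y : V, e = s(x, y) → ¬ SameRegion P x y}

/-- The `lam`-level partition of a subgraph `X`: connected components of the
`lam`-level graph `(V(X), {u ∈ E(X) : w u < lam})`, as a set of regions. -/
def levelPartition {G : SimpleGraph V} (X : G.Subgraph) {α : Type*} [LT α]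
    (w : Sym2 V → α) (lam : α) : Set (Set V) :=
  {S | ∃ x ∈ X.verts,
    S = {y | Relation.ReflTransGen (fun a b => X.Adj a b ∧ w s(a, b) < lam) x y}}

/-- The `lam`-level partition of the graph `G` itself (quasi-flat zones at level `lam`). -/
def qfz (G : SimpleGraph V) (w : Sym2 V → ℕ) (lam : ℕ) : Set (Set V) :=
  {S | ∃ x : V,
    S = {y | Relation.ReflTransGen (fun a b => G.Adj a b ∧ w s(a, b) < lam) x y}}

/-- `(P₀, …, P_l)` is a complete hierarchy on `V`. -/
def IsCompleteHierarchy (P : ℕ → Set (Set V)) (l : ℕ) : Prop :=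
  (∀ i ≤ l, Setoid.IsPartition (P i)) ∧
  (∀ i, 1 ≤ i → i ≤ l → Refines (P (i - 1)) (P i)) ∧
  (P 0 = {S | ∃ x : V, S = {x}}) ∧
  (P l = {Set.univ})

/-- A complete hierarchy all of whose regions induce connected subgraphs of `G`. -/
def IsConnectedHierarchy (G : SimpleGraph V) (P : ℕ → Set (Set V)) (l : ℕ) : Prop :=
  IsCompleteHierarchy P l ∧ ∀ i ≤ l, ∀ S ∈ P i, (G.induce S).Connected

/-- The saliency map of the hierarchy `(P₀, …, P_l)`:
`Φ(H)(u) = max {lam ≤ l : u ∈ φ(P lam)}`. -/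
noncomputable def saliency (G : SimpleGraph V) (P : ℕ → Set (Set V)) (l : ℕ)
    (e : Sym2 V) : ℕ :=
  sSup {lam | lam ≤ l ∧ e ∈ cutOf G (P lam)}

/-- `w` is a saliency map on `G`: the saliency map of some connected complete
hierarchy of depth `|E|`. -/
def IsSaliencyMap (G : SimpleGraph V) [Fintype G.edgeSet] (w : Sym2 V → ℕ) : Prop :=
  ∃ P : ℕ → Set (Set V), IsConnectedHierarchy G P G.edgeFinset.card ∧
    ∀ e ∈ G.edgeSet, w e = saliency G P G.edgeFinset.card e

/-- Total weight of a subgraph. -/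
noncomputable def sgWeight [Fintype V] {G : SimpleGraph V} {α : Type*}
    [AddCommMonoid α] (X : G.Subgraph) (w : Sym2 V → α) : α :=
  ∑ e ∈ (Set.toFinite X.edgeSet).toFinset, w e

/-- `X` is a minimum spanning tree of `(G, w)`. -/
def IsMST [Fintype V] {G : SimpleGraph V} {α : Type*} [AddCommMonoid α] [Preorder α]
    (X : G.Subgraph) (w : Sym2 V → α) : Prop :=
  X.verts = Set.univ ∧ X.Connected ∧
  ∀ Y : G.Subgraph, Y.verts = Set.univ → Y.Connected → sgWeight X w ≤ sgWeight Y w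

/-! The saliency of an edge `s(a, b)` is the last level at which `a` and `b` are still
separated; since the hierarchy is increasing, the edges of saliency `< λ` are exactly the
edges inside the regions of `P λ`. Connectedness of each region then makes the components
of those edges the regions themselves. -/

theorem Refines.refl (P : Set (Set V)) : Refines P P :=
  fun R hR => ⟨R, hR, le_rfl⟩

theorem Refines.trans {P Q T : Set (Set V)} (hPQ : Refines P Q) (hQT : Refines Q T) :
    Refines P T := by
  intro R hR
  obtain ⟨S, hS, hRS⟩ := hPQ R hR
  obtain ⟨U, hU, hSU⟩ := hQT S hS
  exact ⟨U, hU, hRS.trans hSU⟩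

theorem refines_of_le {P : ℕ → Set (Set V)} {l : ℕ}
    (h : ∀ i, 1 ≤ i → i ≤ l → Refines (P (i - 1)) (P i)) {i j : ℕ} (hij : i ≤ j)
    (hjl : j ≤ l) : Refines (P i) (P j) := by
  induction j, hij using Nat.le_induction with
  | base => exact Refines.refl _
  | succ n _ ih => exact (ih (by omega)).trans (h (n + 1) (by omega) hjl)

theorem SameRegion.symm {P : Set (Set V)} {x y : V} (h : SameRegion P x y) :
    SameRegion P y x :=
  let ⟨R, hR, hx, hy⟩ := h
  ⟨R, hR, hy, hx⟩

theorem SameRegion.mono {P Q : Set (Set V)} (hPQ : Refines P Q) {x y : V}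
    (h : SameRegion P x y) : SameRegion Q x y := by
  obtain ⟨R, hR, hx, hy⟩ := h
  obtain ⟨S, hS, hRS⟩ := hPQ R hR
  exact ⟨S, hS, hRS hx, hRS hy⟩

theorem SameRegion.eq_of_singletons {x y : V} (h : SameRegion {S | ∃ z : V, S = {z}} x y) :
    x = y := by
  obtain ⟨R, ⟨z, rfl⟩, hx, hy⟩ := h
  exact hx.trans hy.symm

theorem Setoid.IsPartition.mem_of_sameRegion {P : Set (Set V)} (hP : Setoid.IsPartition P)
    {R : Set V} (hR : R ∈ P) {x y : V} (hx : x ∈ R) (h : SameRegion P x y) : y ∈ R := by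
  obtain ⟨S, hS, hxS, hyS⟩ := h
  rwa [Setoid.eq_of_mem_eqv_class hP.2 hR hx hS hxS]

theorem mem_cutOf_iff {G : SimpleGraph V} {P : Set (Set V)} {a b : V} (hab : G.Adj a b) :
    s(a, b) ∈ cutOf G P ↔ ¬ SameRegion P a b := by
  refine ⟨fun h => h.2 a b rfl, fun h => ⟨hab, fun x y hxy hxy' => h ?_⟩⟩
  rcases Sym2.eq_iff.mp hxy with ⟨rfl, rfl⟩ | ⟨rfl, rfl⟩
  exacts [hxy', hxy'.symm]

theorem Nat.sSup_lt_iff_notMem_of_isLowerSet {S : Set ℕ} (hne : S.Nonempty)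
    (hbdd : BddAbove S) (hS : IsLowerSet S) {n : ℕ} : sSup S < n ↔ n ∉ S := by
  refine ⟨fun h hn => (le_csSup hbdd hn).not_gt h, fun hn => ?_⟩
  by_contra! h
  exact hn (hS h (Nat.sSup_mem hne hbdd))

theorem saliency_lt_iff {G : SimpleGraph V} {P : ℕ → Set (Set V)} {l : ℕ}
    (hH : IsCompleteHierarchy P l) {a b : V} (hab : G.Adj a b) {lam : ℕ} (hlam : lam ≤ l) :
    saliency G P l s(a, b) < lam ↔ SameRegion (P lam) a b := by
  obtain ⟨-, hrefines, hbottom, -⟩ := hH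
  have hcut : ∀ μ, s(a, b) ∈ cutOf G (P μ) ↔ ¬ SameRegion (P μ) a b :=
    fun μ => mem_cutOf_iff hab
  have hne : (0 : ℕ) ∈ {μ | μ ≤ l ∧ s(a, b) ∈ cutOf G (P μ)} := by
    refine ⟨l.zero_le, (hcut 0).mpr fun h => hab.ne ?_⟩
    rw [hbottom] at h
    exact h.eq_of_singletons
  have hlower : IsLowerSet {μ | μ ≤ l ∧ s(a, b) ∈ cutOf G (P μ)} := by
    rintro μ ν hνμ ⟨hμl, hμ⟩
    refine ⟨hνμ.trans hμl, (hcut ν).mpr fun h => (hcut μ).mp hμ ?_⟩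
    exact h.mono (refines_of_le hrefines hνμ hμl)
  rw [saliency, Nat.sSup_lt_iff_notMem_of_isLowerSet ⟨0, hne⟩ ⟨l, fun μ hμ => hμ.1⟩ hlower]
  simp [hlam, hcut]

theorem setOf_reflTransGen_eq_of_isPartition {G : SimpleGraph V} {P : Set (Set V)}
    (hP : Setoid.IsPartition P) (hconn : ∀ R ∈ P, (G.induce R).Connected)
    {R : Set V} (hR : R ∈ P) {x : V} (hx : x ∈ R) :
    {y | Relation.ReflTransGen (fun a b => G.Adj a b ∧ SameRegion P a b) x y} = R := by
  ext y
  refine ⟨fun hy => ?_, fun hy => ?_⟩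
  · induction hy with
    | refl => exact hx
    | tail _ hstep ih => exact hP.mem_of_sameRegion hR ih hstep.2
  · have hreach := (reachable_iff_reflTransGen _ _).mp (hconn R hR ⟨x, hx⟩ ⟨y, hy⟩)
    refine hreach.lift Subtype.val fun a b hadj => ?_
    exact ⟨by simpa using hadj, R, hR, a.2, b.2⟩

theorem qfz_eq_of_isPartition {G : SimpleGraph V} {P : Set (Set V)}
    (hP : Setoid.IsPartition P) (hconn : ∀ R ∈ P, (G.induce R).Connected)
    {w : Sym2 V → ℕ} {lam : ℕ}
    (hw : ∀ ⦃a b⦄, G.Adj a b → (w s(a, b) < lam ↔ SameRegion P a b)) :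
    qfz G w lam = P := by
  have hrel : (fun a b => G.Adj a b ∧ w s(a, b) < lam) =
      fun a b => G.Adj a b ∧ SameRegion P a b := by
    ext a b
    exact and_congr_right (@hw a b)
  ext S
  simp only [qfz, hrel, Set.mem_ofPred_eq]
  constructor
  · rintro ⟨x, rfl⟩
    obtain ⟨R, ⟨hR, hxR⟩, -⟩ := hP.2 x
    rwa [setOf_reflTransGen_eq_of_isPartition hP hconn hR hxR]
  · intro hS
    obtain ⟨x, hx⟩ := Set.nonempty_iff_ne_empty.mpr (ne_of_mem_of_not_mem hS hP.1)
    exact ⟨x, (setOf_reflTransGen_eq_of_isPartition hP hconn hS hx).symm⟩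

theorem qfz_of_saliency_eq_hierarchy_general (G : SimpleGraph V)
    (P : ℕ → Set (Set V)) (l : ℕ)
    (hH : IsConnectedHierarchy G P l) :
    ∀ lam ≤ l, qfz G (saliency G P l) lam = P lam :=
  fun _ hlam => qfz_eq_of_isPartition (hH.1.1 _ hlam) (hH.2 _ hlam)
    fun _ _ hab => saliency_lt_iff hH.1 hab hlam

/-- for every `lam ≤ l`, the `lam`-level partition of `G` for the
saliency map `Φ(H)` is exactly `P lam`. -/
theorem qfz_of_saliency_eq_hierarchy [Fintype V] (G : SimpleGraph V)
    (hG : G.Connected) (P : ℕ → Set (Set V)) (l : ℕ)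
    (hH : IsConnectedHierarchy G P l) :
    ∀ lam ≤ l, qfz G (saliency G P l) lam = P lam :=
  qfz_of_saliency_eq_hierarchy_general G P l hH
end

section
/- Let G = (V,E) be a finite connected graph and w : E → ℕ. Then Ψ(w) = Φ(QFZ(G,w)) is the pointwise largest saliency map that is ≤ w; i.e., Ψ(w) ≤ w, Ψ(w) is a saliency map, and for every saliency map w' with w' ≤ w one has w' ≤ Ψ(w). -/
open SimpleGraph

variable {V : Type*}

/-!
The quasi-flat zones of `w` at level `λ` are the connected components of the level graph
`G_λ = (V, {u : w u < λ})`. These graphs grow with `λ`, start with no edges and end with `G`, so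
`QFZ(G, w)` is itself a connected complete hierarchy, and an edge cut at level `λ` has weight at
least `λ`; hence `Ψ(w)` is a saliency map below `w`.

For maximality let `w' = Φ(H) ≤ w`, `u = xy` an edge and `k = w' u`. The maximum defining `Φ(H)`
is attained (level `0` consists of singletons), so `x` and `y` lie in distinct regions of `H_k`.
An edge of `G_k` has `w'`-weight `< k`, so it never crosses a region of `H_k`; therefore `x`
and `y` are not joined in `G_k`, `u` is cut at level `k` of `QFZ(G, w)`, and `k ≤ Ψ(w) u`.
-/

def levelGraph (G : SimpleGraph V) {α : Type*} [LT α] (w : Sym2 V → α) (lam : α) :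
    SimpleGraph V where
  Adj a b := G.Adj a b ∧ w s(a, b) < lam
  symm := ⟨fun _ _ h => ⟨h.1.symm, by rw [Sym2.eq_swap]; exact h.2⟩⟩
  loopless := ⟨fun _ h => h.1.ne rfl⟩

section LevelGraph

variable {G : SimpleGraph V} {α : Type*}

@[simp]
lemma levelGraph_adj [LT α] {w : Sym2 V → α} {lam : α} {a b : V} :
    (levelGraph G w lam).Adj a b ↔ G.Adj a b ∧ w s(a, b) < lam :=
  Iff.rfl

lemma levelGraph_le [LT α] (w : Sym2 V → α) (lam : α) : levelGraph G w lam ≤ G :=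
  fun _ _ h => (levelGraph_adj.1 h).1

lemma levelGraph_mono [Preorder α] (w : Sym2 V → α) {lam mu : α} (h : lam ≤ mu) :
    levelGraph G w lam ≤ levelGraph G w mu :=
  fun _ _ hab => levelGraph_adj.2 ⟨hab.1, hab.2.trans_le h⟩

lemma levelGraph_anti [Preorder α] {w w' : Sym2 V → α}
    (hle : ∀ e ∈ G.edgeSet, w' e ≤ w e) (lam : α) :
    levelGraph G w lam ≤ levelGraph G w' lam :=
  fun _ _ hab => levelGraph_adj.2 ⟨hab.1, (hle _ hab.1).trans_lt hab.2⟩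

lemma levelGraph_bot [Preorder α] [OrderBot α] (w : Sym2 V → α) :
    levelGraph G w ⊥ = ⊥ := by
  ext a b
  simp

lemma levelGraph_eq_self [LT α] {w : Sym2 V → α} {lam : α}
    (hw : ∀ e ∈ G.edgeSet, w e < lam) : levelGraph G w lam = G := by
  ext a b
  exact ⟨fun h => h.1, fun h => levelGraph_adj.2 ⟨h, hw _ h⟩⟩

end LevelGraph

section ReachableClasses

variable {H H' G : SimpleGraph V}

lemma refines_classes_of_le (h : H ≤ H') :
    Refines H.reachableSetoid.classes H'.reachableSetoid.classes := by
  rintro _ ⟨y, rfl⟩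
  exact ⟨_, H'.reachableSetoid.mem_classes y, fun _ hx => hx.mono h⟩

lemma classes_reachableSetoid_bot :
    (⊥ : SimpleGraph V).reachableSetoid.classes = {S | ∃ x : V, S = {x}} := by
  have hclass : ∀ y : V, {x | (⊥ : SimpleGraph V).reachableSetoid x y} = {y} :=
    fun _ => Set.ext fun _ => reachable_bot
  ext S
  simp only [Setoid.classes, hclass]

lemma classes_reachableSetoid_of_connected (hH : H.Connected) :
    H.reachableSetoid.classes = {Set.univ} := by
  have hclass : ∀ y : V, {x | H.reachableSetoid x y} = Set.univ :=
    fun y => Set.eq_univ_of_forall fun x => hH.preconnected x y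
  ext S
  constructor
  · rintro ⟨y, rfl⟩
    exact hclass y
  · rintro rfl
    obtain ⟨y⟩ := hH.nonempty
    exact ⟨y, (hclass y).symm⟩

lemma connected_induce_of_mem_classes (hHG : H ≤ G) {S : Set V}
    (hS : S ∈ H.reachableSetoid.classes) : (G.induce S).Connected := by
  obtain ⟨y, rfl⟩ := hS
  have hsupp : {x | H.reachableSetoid x y} = (H.connectedComponentMk y).supp := by
    ext x
    exact (ConnectedComponent.eq).symm
  rw [hsupp]
  exact (ConnectedComponent.maximal_connected_induce_supp _).prop.mono fun _ _ h => hHG h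

end ReachableClasses

section Partition

variable {P : Set (Set V)}

lemma sameRegion_iff_mkClasses (hP : Setoid.IsPartition P) {x y : V} :
    SameRegion P x y ↔ Setoid.mkClasses P hP.2 x y := by
  rw [Setoid.rel_iff_exists_classes, Setoid.classes_mkClasses P hP]
  rfl

lemma sameRegion_of_reachable (hP : Setoid.IsPartition P) {H : SimpleGraph V}
    (hH : ∀ a b, H.Adj a b → SameRegion P a b) {x y : V} (hxy : H.Reachable x y) :
    SameRegion P x y := by
  rw [sameRegion_iff_mkClasses hP]
  rw [reachable_iff_reflTransGen] at hxy
  induction hxy with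
  | refl => exact Setoid.refl' _ _
  | tail _ hab ih => exact Setoid.trans' _ ih ((sameRegion_iff_mkClasses hP).1 (hH _ _ hab))

lemma mk_mem_cutOf_iff {G : SimpleGraph V} {x y : V} :
    s(x, y) ∈ cutOf G P ↔ G.Adj x y ∧ ¬ SameRegion P x y := by
  refine ⟨fun h => ⟨h.1, h.2 x y rfl⟩, fun ⟨hxy, hnot⟩ => ⟨hxy, fun a b hab => ?_⟩⟩
  rcases Sym2.eq_iff.1 hab with ⟨rfl, rfl⟩ | ⟨rfl, rfl⟩
  · exact hnot
  · exact fun ⟨R, hR, hbR, haR⟩ => hnot ⟨R, hR, haR, hbR⟩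

lemma mem_cutOf_singletons {G : SimpleGraph V} {e : Sym2 V} (he : e ∈ G.edgeSet) :
    e ∈ cutOf G {S | ∃ x : V, S = {x}} := by
  induction e using Sym2.ind with
  | _ x y =>
    refine mk_mem_cutOf_iff.2 ⟨he, ?_⟩
    rintro ⟨_, ⟨z, rfl⟩, rfl, rfl⟩
    exact (G.mem_edgeSet.1 he).ne rfl

end Partition

section Qfz

variable {G : SimpleGraph V} {w : Sym2 V → ℕ} {lam : ℕ}

lemma qfz_eq_classes : qfz G w lam = (levelGraph G w lam).reachableSetoid.classes := by
  ext S
  refine exists_congr fun x => ?_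
  have hclass : {y | Relation.ReflTransGen (fun a b => G.Adj a b ∧ w s(a, b) < lam) x y} =
      {y | (levelGraph G w lam).reachableSetoid y x} :=
    Set.ext fun y =>
      (reachable_iff_reflTransGen (G := levelGraph G w lam) x y).symm.trans reachable_comm
  rw [hclass]

lemma sameRegion_qfz_iff {x y : V} :
    SameRegion (qfz G w lam) x y ↔ (levelGraph G w lam).Reachable x y := by
  rw [qfz_eq_classes]
  exact (Setoid.rel_iff_exists_classes _).symm

lemma le_of_mem_cutOf_qfz {e : Sym2 V} (he : e ∈ cutOf G (qfz G w lam)) : lam ≤ w e := by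
  induction e using Sym2.ind with
  | _ x y =>
    obtain ⟨hxy, hnot⟩ := mk_mem_cutOf_iff.1 he
    by_contra! hlt
    exact hnot (sameRegion_qfz_iff.2 (Adj.reachable (levelGraph_adj.2 ⟨hxy, hlt⟩)))

lemma isConnectedHierarchy_qfz (hG : G.Connected) {l : ℕ} (hw : ∀ e ∈ G.edgeSet, w e < l) :
    IsConnectedHierarchy G (qfz G w) l := by
  simp only [IsConnectedHierarchy, IsCompleteHierarchy, qfz_eq_classes]
  refine ⟨⟨fun _ _ => Setoid.isPartition_classes _, ?_, ?_, ?_⟩, ?_⟩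
  · exact fun i _ _ => refines_classes_of_le (levelGraph_mono w (Nat.sub_le i 1))
  · rw [← Nat.bot_eq_zero, levelGraph_bot, classes_reachableSetoid_bot]
  · rw [levelGraph_eq_self hw, classes_reachableSetoid_of_connected hG]
  · exact fun i _ S hS => connected_induce_of_mem_classes (levelGraph_le w i) hS

end Qfz

section Saliency

variable {G : SimpleGraph V} {P : ℕ → Set (Set V)} {l : ℕ} {e : Sym2 V}

lemma le_saliency {lam : ℕ} (hlam : lam ≤ l) (he : e ∈ cutOf G (P lam)) :
    lam ≤ saliency G P l e :=
  le_csSup ⟨l, fun _ h => h.1⟩ ⟨hlam, he⟩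

lemma saliency_mem_cutOf (hP0 : P 0 = {S | ∃ x : V, S = {x}}) (he : e ∈ G.edgeSet) :
    saliency G P l e ≤ l ∧ e ∈ cutOf G (P (saliency G P l e)) :=
  Nat.sSup_mem (s := {lam | lam ≤ l ∧ e ∈ cutOf G (P lam)})
    ⟨0, Nat.zero_le l, hP0 ▸ mem_cutOf_singletons he⟩ ⟨l, fun _ h => h.1⟩

lemma saliency_qfz_le {w : Sym2 V → ℕ} : saliency G (qfz G w) l e ≤ w e :=
  csSup_le' fun _ h => le_of_mem_cutOf_qfz h.2

lemma sameRegion_of_levelGraph_saliency {k : ℕ} (hk : k ≤ l) {a b : V}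
    (hab : (levelGraph G (saliency G P l) k).Adj a b) :
    SameRegion (P k) a b := by
  by_contra hnot
  exact (le_saliency hk (mk_mem_cutOf_iff.2 ⟨(levelGraph_adj.1 hab).1, hnot⟩)).not_gt
    (levelGraph_adj.1 hab).2

lemma saliency_le_saliency_qfz (hpart : ∀ i ≤ l, Setoid.IsPartition (P i))
    (hP0 : P 0 = {S | ∃ x : V, S = {x}}) {w : Sym2 V → ℕ}
    (hle : ∀ e ∈ G.edgeSet, saliency G P l e ≤ w e) (he : e ∈ G.edgeSet) :
    saliency G P l e ≤ saliency G (qfz G w) l e := by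
  obtain ⟨hk, hcut⟩ := saliency_mem_cutOf (l := l) hP0 he
  refine le_saliency hk ?_
  induction e using Sym2.ind with
  | _ x y =>
    refine mk_mem_cutOf_iff.2 ⟨he, fun hxy => (mk_mem_cutOf_iff.1 hcut).2 ?_⟩
    exact sameRegion_of_reachable (hpart _ hk)
      (fun a b hab => sameRegion_of_levelGraph_saliency hk (levelGraph_anti hle _ hab))
      (sameRegion_qfz_iff.1 hxy)

end Saliency

theorem saliency_operator_is_opening_general (G : SimpleGraph V)
    [Fintype G.edgeSet] (hG : G.Connected) (w : Sym2 V → ℕ)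
    (hw : ∀ e ∈ G.edgeSet, w e < G.edgeFinset.card) :
    (∀ e ∈ G.edgeSet, saliency G (qfz G w) G.edgeFinset.card e ≤ w e) ∧
    IsSaliencyMap G (saliency G (qfz G w) G.edgeFinset.card) ∧
    (∀ w' : Sym2 V → ℕ, IsSaliencyMap G w' → (∀ e ∈ G.edgeSet, w' e ≤ w e) →
      ∀ e ∈ G.edgeSet, w' e ≤ saliency G (qfz G w) G.edgeFinset.card e) := by
  refine ⟨fun _ _ => saliency_qfz_le,
    ⟨qfz G w, isConnectedHierarchy_qfz hG hw, fun _ _ => rfl⟩, ?_⟩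
  rintro w' ⟨P, ⟨⟨hpart, -, hP0, -⟩, -⟩, hw'⟩ hle e he
  rw [hw' e he]
  exact saliency_le_saliency_qfz hpart hP0 (fun e he => hw' e he ▸ hle e he) he

/-- `Ψ(w)` is the pointwise largest saliency map below `w`. -/
theorem saliency_operator_is_opening [Fintype V] (G : SimpleGraph V)
    [Fintype G.edgeSet] (hG : G.Connected) (w : Sym2 V → ℕ)
    (hw : ∀ e ∈ G.edgeSet, w e < G.edgeFinset.card) :
    (∀ e ∈ G.edgeSet, saliency G (qfz G w) G.edgeFinset.card e ≤ w e) ∧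
    IsSaliencyMap G (saliency G (qfz G w) G.edgeFinset.card) ∧
    (∀ w' : Sym2 V → ℕ, IsSaliencyMap G w' → (∀ e ∈ G.edgeSet, w' e ≤ w e) →
      ∀ e ∈ G.edgeSet, w' e ≤ saliency G (qfz G w) G.edgeFinset.card e) :=
  saliency_operator_is_opening_general G hG w hw
end
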